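/- Criterion for exponential ergodicity in entropy via log-Harnack and Talagrand inequalities: Let (P_t^*)_{t≥0} be the semigroup of maps on 𝒫_2(ℝ^d) given by P_t^*μ := law of the solution of the DDSDE with initial distribution μ, and suppose P_t^* has a unique invariant probability measure μ_∞ ∈ 𝒫_2(ℝ^d), and for some constants t_0, c_0, C > 0 the log-Harnack inequality P_{t_0}(log f)(ν) ≤ log P_{t_0}f(μ) + c_0 W_2(μ,ν)² holds for all μ,ν ∈ 𝒫_2(ℝ^d) and bounded positive measurable f, and the Talagrand inequality W_2(μ,μ_∞)² ≤ C·Ent(μ|μ_∞) holds for all μ ∈ 𝒫_2(ℝ^d). Then: (1) if W_2(P_t^*μ,μ_∞)² ≤ c_1e^{−λt}W_2(μ,μ_∞)² for some c_1,λ,t_1 ≥ 0, all t ≥ t_1 and all μ ∈ 𝒫_2(ℝ^d), then max{c_0^{−1}Ent(P_t^*μ|μ_∞), W_2(P_t^*μ,μ_∞)²} ≤ c_1e^{−λ(t−t_0)} min{W_2(μ,μ_∞)², C·Ent(μ|μ_∞)} for all t ≥ t_0+t_1 and μ ∈ 𝒫_2(ℝ^d); (2) if Ent(P_t^*μ|μ_∞)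 ≤ c_2e^{−λt}Ent(μ|μ_∞) for some λ,c_2,t_2 > 0, all t ≥ t_2 and all μ ∈ 𝒫_2(ℝ^d), then max{Ent(P_t^*μ|μ_∞), C^{−1}W_2(P_t^*μ,μ_∞)²} ≤ c_2e^{−λ(t−t_0)} min{c_0W_2(μ,μ_∞)², Ent(μ|μ_∞)} for all t ≥ t_0+t_2 and μ ∈ 𝒫_2(ℝ^d). -/

import Mathlib

open MeasureTheory ProbabilityTheory Filter Set Real
open scoped ENNReal NNReal Topology RealInnerProductSpace

noncomputable section

namespace DDSDE

/-- The state space `ℝ^d` with the Euclidean norm. -/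
abbrev Vec (d : ℕ) := EuclideanSpace ℝ (Fin d)

/-- `d × m` real matrices. -/
abbrev Mat (d m : ℕ) := Matrix (Fin d) (Fin m) ℝ

/-- Hilbert–Schmidt (Frobenius) norm of a matrix. -/
def matNorm {d m : ℕ} (M : Mat d m) : ℝ :=
  Real.sqrt (∑ i, ∑ j, (M i j) ^ 2)

/-- Couplings of two measures on (possibly different) measurable spaces. -/
def Coupling {E F : Type*} [MeasurableSpace E] [MeasurableSpace F]
    (μ : Measure E) (ν : Measure F) : Set (Measure (E × F)) :=
  {pi | IsProbabilityMeasure pi ∧ pi.map Prod.fst = μ ∧ pi.map Prod.snd = ν}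

/-- The `L^p`-Wasserstein distance (with the convention `1/(p ⊔ 1)` in the exponent). -/
def Wdist {E : Type*} [MeasurableSpace E] [Dist E] (p : ℝ) (μ ν : Measure E) : ℝ :=
  sInf ((fun pi : Measure (E × E) =>
    (∫ z, dist z.1 z.2 ^ p ∂pi) ^ (1 / max p 1)) '' Coupling μ ν)

/-- The class `𝒫_p(ℝ^d)` of Borel probability measures with finite `p`-th moment. -/
def Pclass (p : ℝ) (d : ℕ) : Set (Measure (Vec d)) :=
  {μ | IsProbabilityMeasure μ ∧ ∫⁻ x, ENNReal.ofReal (‖x‖ ^ p) ∂μ < ∞}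

/-- Total variation distance, `‖μ-ν‖_TV := 2 sup_A |μ(A) - ν(A)|`. -/
def TVdist {E : Type*} [MeasurableSpace E] (μ ν : Measure E) : ℝ :=
  2 * sSup {r | ∃ A : Set E, MeasurableSet A ∧ r = |(μ A).toReal - (ν A).toReal|}

open Classical in
/-- Relative entropy `Ent(ν|μ) = ∫ log (dν/dμ) dν` if `ν ≪ μ` (with value `∞` otherwise). -/
def Ent {E : Type*} [MeasurableSpace E] (ν μ : Measure E) : ℝ≥0∞ :=
  if ν ≪ μ ∧ Integrable (llr ν μ) ν then ENNReal.ofReal (∫ x, llr ν μ x ∂ν) else ∞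

/-- A `ℝ^m`-valued Brownian motion on a probability space. -/
structure IsBrownianMotion {Ω : Type*} [MeasurableSpace Ω] {m : ℕ} (P : Measure Ω)
    (W : ℝ → Ω → Vec m) : Prop where
  meas : ∀ t, Measurable (W t)
  start : ∀ᵐ ω ∂P, W 0 ω = 0
  cont : ∀ᵐ ω ∂P, Continuous fun t => W t ω
  gaussInc : ∀ ⦃s t : ℝ⦄, 0 ≤ s → s ≤ t → ∀ i : Fin m,
    P.map (fun ω => W t ω i - W s ω i) = gaussianReal 0 ((t - s).toNNReal)
  indepInc : ∀ (n : ℕ) (τ : ℕ → ℝ), Monotone τ → 0 ≤ τ 0 →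
    iIndepFun
      (fun p : Fin n × Fin m => fun ω => W (τ (p.1 + 1)) ω p.2 - W (τ p.1) ω p.2) P

/-- A Brownian motion together with a filtration to which it is adapted and with respect to
which it has independent increments. -/
structure IsBrownianSetup {Ω : Type*} [mΩ : MeasurableSpace Ω] {m : ℕ} (P : Measure Ω)
    (F : Filtration ℝ mΩ) (W : ℝ → Ω → Vec m) : Prop where
  bm : IsBrownianMotion P W
  adapted : ∀ t : ℝ, Measurable[F t] (W t)
  indepPast : ∀ ⦃s t : ℝ⦄, 0 ≤ s → s ≤ t →
    Indep (MeasurableSpace.comap (fun ω => W t ω - W s ω) inferInstance) (F s) P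

/-- Riemann sums approximating the Itô integral `∫_s^t H_r dW_r` along uniform partitions. -/
def riemannSum {Ω : Type*} {d m : ℕ} (H : ℝ → Ω → Mat d m) (W : ℝ → Ω → Vec m)
    (s t : ℝ) (n : ℕ) (ω : Ω) : Vec d :=
  ∑ k ∈ Finset.range n,
    (EuclideanSpace.equiv (Fin d) ℝ).symm
      ((H (s + k * (t - s) / n) ω).mulVec
        (fun j => W (s + (k + 1) * (t - s) / n) ω j - W (s + k * (t - s) / n) ω j))

/-- `I` is the Itô integral `∫_s^t H_r dW_r`: the Riemann sums converge to `I` in probability. -/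
def IsItoIntegral {Ω : Type*} [MeasurableSpace Ω] {d m : ℕ} (P : Measure Ω)
    (W : ℝ → Ω → Vec m) (H : ℝ → Ω → Mat d m) (s t : ℝ) (I : Ω → Vec d) : Prop :=
  TendstoInMeasure P (fun n => riemannSum H W s t n) atTop I

/-- Scalar Riemann sums approximating `∫_s^t ⟨h_r, dW_r⟩`. -/
def riemannSumS {Ω : Type*} {m : ℕ} (h : ℝ → Ω → Vec m) (W : ℝ → Ω → Vec m)
    (s t : ℝ) (n : ℕ) (ω : Ω) : ℝ :=
  ∑ k ∈ Finset.range n, ∑ j,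
    h (s + k * (t - s) / n) ω j * (W (s + (k + 1) * (t - s) / n) ω j - W (s + k * (t - s) / n) ω j)

/-- `I` is the scalar Itô integral `∫_s^t ⟨h_r, dW_r⟩`. -/
def IsItoIntegralS {Ω : Type*} [MeasurableSpace Ω] {m : ℕ} (P : Measure Ω)
    (W : ℝ → Ω → Vec m) (h : ℝ → Ω → Vec m) (s t : ℝ) (I : Ω → ℝ) : Prop :=
  TendstoInMeasure P (fun n => riemannSumS h W s t n) atTop I

variable {d m : ℕ}

/-- A (strong) solution of the DDSDE
`dX_t = b(t,X_t,𝓛_{X_t}) dt + σ(t,X_t,𝓛_{X_t}) dW_t` on the time set `J` starting at time `s`. -/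
structure IsSolutionIn {Ω : Type*} [mΩ : MeasurableSpace Ω]
    (b : ℝ → Vec d → Measure (Vec d) → Vec d)
    (σ : ℝ → Vec d → Measure (Vec d) → Mat d m)
    (P : Measure Ω) (F : Filtration ℝ mΩ) (W : ℝ → Ω → Vec m)
    (s : ℝ) (J : Set ℝ) (X : ℝ → Ω → Vec d) : Prop where
  meas : ∀ t, Measurable (X t)
  adapted : ∀ t ∈ J, Measurable[F t] (X t)
  cont : ∀ᵐ ω ∂P, ContinuousOn (fun t => X t ω) J
  intOn : ∀ t ∈ J, IntegrableOn
      (fun r => ∫ ω, (‖b r (X r ω) (P.map (X r))‖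
        + matNorm (σ r (X r ω) (P.map (X r))) ^ 2) ∂P) (Icc s t)
  sde : ∀ t ∈ J, ∃ I : Ω → Vec d,
      IsItoIntegral P W (fun r ω => σ r (X r ω) (P.map (X r))) s t I ∧
      ∀ᵐ ω ∂P, X t ω = X s ω + (∫ r in s..t, b r (X r ω) (P.map (X r))) + I ω

/-- A weak solution of the DDSDE on the time set `J`, starting at time `s` with initial
distribution `ζ`: a filtered probability space carrying a Brownian motion and a solution. -/
structure WeakSolutionIn (b : ℝ → Vec d → Measure (Vec d) → Vec d)
    (σ : ℝ → Vec d → Measure (Vec d) → Mat d m)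
    (s : ℝ) (J : Set ℝ) (ζ : Measure (Vec d)) where
  Ω : Type
  mΩ : MeasurableSpace Ω
  P : @Measure Ω mΩ
  probP : @IsProbabilityMeasure Ω mΩ P
  F : @Filtration Ω ℝ inferInstance mΩ
  W : ℝ → Ω → Vec m
  X : ℝ → Ω → Vec d
  setup : @IsBrownianSetup Ω mΩ m P F W
  sol : @IsSolutionIn d m Ω mΩ b σ P F W s J X
  init : @Measure.map Ω (Vec d) mΩ inferInstance (X s) P = ζ

/-- The time-`t` marginal law of a weak solution. -/
def WeakSolutionIn.law {b : ℝ → Vec d → Measure (Vec d) → Vec d}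
    {σ : ℝ → Vec d → Measure (Vec d) → Mat d m} {s : ℝ} {J : Set ℝ} {ζ : Measure (Vec d)}
    (sol : WeakSolutionIn b σ s J ζ) (t : ℝ) : Measure (Vec d) :=
  @Measure.map _ _ sol.mΩ _ (sol.X t) sol.P

/-- The law of the whole path of a weak solution (with the product σ-algebra on paths). -/
def WeakSolutionIn.pathLaw {b : ℝ → Vec d → Measure (Vec d) → Vec d}
    {σ : ℝ → Vec d → Measure (Vec d) → Mat d m} {s : ℝ} {J : Set ℝ} {ζ : Measure (Vec d)}
    (sol : WeakSolutionIn b σ s J ζ) : Measure (ℝ → Vec d) :=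
  @Measure.map _ _ sol.mΩ _ (fun ω t => sol.X t ω) sol.P

/-- Strong existence and pathwise uniqueness for the DDSDE, for initial distributions
in the class `S`. -/
def StrongWellPosed (b : ℝ → Vec d → Measure (Vec d) → Vec d)
    (σ : ℝ → Vec d → Measure (Vec d) → Mat d m)
    (s : ℝ) (J : Set ℝ) (S : Set (Measure (Vec d))) : Prop :=
  ∀ (Ω : Type) [mΩ : MeasurableSpace Ω] (P : Measure Ω) [IsProbabilityMeasure P]
    (F : Filtration ℝ mΩ) (W : ℝ → Ω → Vec m), IsBrownianSetup P F W →
    ∀ ξ : Ω → Vec d, Measurable[F s] ξ → P.map ξ ∈ S →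
      (∃ X, IsSolutionIn b σ P F W s J X ∧ X s =ᵐ[P] ξ) ∧
      (∀ X Y, IsSolutionIn b σ P F W s J X → X s =ᵐ[P] ξ →
        IsSolutionIn b σ P F W s J Y → Y s =ᵐ[P] ξ → ∀ t ∈ J, X t =ᵐ[P] Y t)

/-- Existence of weak solutions for all initial distributions in `S`. -/
def WeakExistence (b : ℝ → Vec d → Measure (Vec d) → Vec d)
    (σ : ℝ → Vec d → Measure (Vec d) → Mat d m)
    (s : ℝ) (J : Set ℝ) (S : Set (Measure (Vec d))) : Prop :=
  ∀ ζ ∈ S, Nonempty (WeakSolutionIn b σ s J ζ)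

/-- Uniqueness in law of weak solutions for all initial distributions in `S`. -/
def WeakUniqueness (b : ℝ → Vec d → Measure (Vec d) → Vec d)
    (σ : ℝ → Vec d → Measure (Vec d) → Mat d m)
    (s : ℝ) (J : Set ℝ) (S : Set (Measure (Vec d))) : Prop :=
  ∀ ζ ∈ S, ∀ sol₁ sol₂ : WeakSolutionIn b σ s J ζ, sol₁.pathLaw = sol₂.pathLaw

/-- The DDSDE is well-posed (strongly and weakly) for initial distributions in `S`. -/
def WellPosed (b : ℝ → Vec d → Measure (Vec d) → Vec d)
    (σ : ℝ → Vec d → Measure (Vec d) → Mat d m)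
    (s : ℝ) (J : Set ℝ) (S : Set (Measure (Vec d))) : Prop :=
  StrongWellPosed b σ s J S ∧ WeakExistence b σ s J S ∧ WeakUniqueness b σ s J S

end DDSDE

/-!
Taking `μ = μ_∞` in the log-Harnack inequality and using invariance gives
`∫ log f d(P_{t₀}^*ν) ≤ log ∫ f dμ_∞ + c₀ W₂(ν, μ_∞)²` for every bounded positive `f`, and the
Donsker–Varadhan variational principle turns this into `Ent(P_{t₀}^*ν | μ_∞) ≤ c₀ W₂(ν, μ_∞)²`
(test with the density `dP_{t₀}^*ν/dμ_∞` clipped to `[e⁻ⁿ, eⁿ]` and let `n → ∞`).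
Together with the Talagrand inequality `W₂² ≤ C Ent`, the factorisations
`P_t^* = P_{t₀}^* P_{t-t₀}^* = P_{t-t₀}^* P_{t₀}^*` transfer exponential decay of either quantity
to the other, at the price of the time shift `t₀`.
-/

def truncate (a x : ℝ) : ℝ := max (min x a) (-a)

lemma continuous_truncate (a : ℝ) : Continuous (truncate a) :=
  (continuous_id.min continuous_const).max continuous_const

lemma abs_truncate_le {a : ℝ} (ha : 0 ≤ a) (x : ℝ) : |truncate a x| ≤ a :=
  abs_le.2 ⟨le_max_right _ _, max_le (min_le_right _ _) (by linarith)⟩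

lemma abs_truncate_le_abs {a : ℝ} (ha : 0 ≤ a) (x : ℝ) : |truncate a x| ≤ |x| := by
  unfold truncate
  rcases le_total x a with h | h <;> rcases le_total x (-a) with h' | h' <;>
    simp [abs_le, *] <;> constructor <;> linarith [le_abs_self x, neg_abs_le x]

lemma truncate_of_abs_le {a x : ℝ} (h : |x| ≤ a) : truncate a x = x := by
  rw [abs_le] at h
  simp [truncate, h.1, h.2]

lemma negPart_truncate_le {a : ℝ} (ha : 0 ≤ a) (x : ℝ) : (truncate a x)⁻ ≤ x⁻ := by
  rcases le_total x a with h | h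
  · exact negPart_anti (by simp [truncate, h])
  · simp [truncate, h, ha]

lemma tendsto_truncate (x : ℝ) : Tendsto (fun n : ℕ => truncate n x) atTop (𝓝 x) :=
  tendsto_const_nhds.congr' <| (eventually_ge_atTop ⌈|x|⌉₊).mono fun _ hn =>
    (truncate_of_abs_le ((Nat.le_ceil _).trans (Nat.cast_le.2 hn))).symm

lemma exp_truncate (a x : ℝ) : exp (truncate a x) = max (min (exp x) (exp a)) (exp (-a)) := by
  rw [truncate, exp_monotone.map_max, exp_monotone.map_min]

lemma abs_eq_add_two_mul_negPart (x : ℝ) : |x| = x + 2 * x⁻ := by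
  linarith [posPart_add_negPart x, posPart_sub_negPart x]

lemma mul_negPart_log_le_one {t : ℝ} (ht : 0 ≤ t) : t * (log t)⁻ ≤ 1 := by
  rw [negPart_def, mul_max_of_nonneg _ _ ht, mul_zero]
  exact max_le (by nlinarith [self_sub_one_le_mul_log ht]) zero_le_one

lemma exp_neg_mul_le_exp_neg_mul_sub {lam t₀ : ℝ} (hlam : 0 ≤ lam) (ht₀ : 0 ≤ t₀) (t : ℝ) :
    exp (-lam * t) ≤ exp (-lam * (t - t₀)) :=
  exp_le_exp.2 (by nlinarith)

lemma ENNReal.ofReal_inv_mul_ofReal_mul {c : ℝ} (hc : 0 < c) (a : ℝ≥0∞) :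
    ENNReal.ofReal c⁻¹ * (ENNReal.ofReal c * a) = a := by
  rw [← mul_assoc, ← ENNReal.ofReal_mul (inv_nonneg.2 hc.le), inv_mul_cancel₀ hc.ne',
    ENNReal.ofReal_one, one_mul]

section Truncation

variable {α : Type*} [MeasurableSpace α] {η : Measure α} [IsFiniteMeasure η]

lemma integrable_truncate_comp {g : α → ℝ} (hg : AEStronglyMeasurable g η) {a : ℝ}
    (ha : 0 ≤ a) : Integrable (fun x => truncate a (g x)) η :=
  (integrable_const a).mono' ((continuous_truncate a).comp_aestronglyMeasurable hg)
    (Eventually.of_forall fun _ => abs_truncate_le ha _)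

lemma integrable_of_integral_truncate_le {g : α → ℝ} {K : ℝ} {ε : ℕ → ℝ}
    (hg : AEStronglyMeasurable g η) (hneg : Integrable (fun x => (g x)⁻) η)
    (hε : Tendsto ε atTop (𝓝 0)) (h : ∀ n : ℕ, ∫ x, truncate n (g x) ∂η ≤ K + ε n) :
    Integrable g η := by
  have hbound : ∀ n : ℕ, ∫⁻ x, ‖truncate n (g x)‖ₑ ∂η ≤
      ENNReal.ofReal (K + ε n + 2 * ∫ x, (g x)⁻ ∂η) := by
    intro n
    have htr := integrable_truncate_comp hg n.cast_nonneg
    have htr_neg : Integrable (fun x => (truncate n (g x))⁻) η := htr.neg_part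
    have hneg_le : ∫ x, (truncate n (g x))⁻ ∂η ≤ ∫ x, (g x)⁻ ∂η :=
      integral_mono htr_neg hneg fun x => negPart_truncate_le n.cast_nonneg _
    rw [← ofReal_integral_norm_eq_lintegral_enorm htr]
    refine ENNReal.ofReal_le_ofReal ?_
    simp_rw [Real.norm_eq_abs, abs_eq_add_two_mul_negPart]
    rw [integral_add htr (htr_neg.const_mul 2), integral_const_mul]
    linarith [h n]
  refine ⟨hg, ?_⟩
  calc ∫⁻ x, ‖g x‖ₑ ∂η = ∫⁻ x, liminf (fun n : ℕ => ‖truncate n (g x)‖ₑ) atTop ∂η :=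
        lintegral_congr fun x =>
          ((continuous_enorm.tendsto _).comp (tendsto_truncate _)).liminf_eq.symm
    _ ≤ liminf (fun n : ℕ => ∫⁻ x, ‖truncate n (g x)‖ₑ ∂η) atTop :=
        lintegral_liminf_le' fun n => (integrable_truncate_comp hg n.cast_nonneg).1.enorm
    _ ≤ ENNReal.ofReal (K + 1 + 2 * ∫ x, (g x)⁻ ∂η) :=
        liminf_le_of_frequently_le' ((hε.eventually (ge_mem_nhds one_pos)).mono fun n hn =>
          (hbound n).trans (ENNReal.ofReal_le_ofReal (by linarith))).frequently
    _ < ∞ := ENNReal.ofReal_lt_top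

lemma integral_le_of_integral_truncate_le {g : α → ℝ} {K : ℝ} {ε : ℕ → ℝ}
    (hg : Integrable g η) (hε : Tendsto ε atTop (𝓝 0))
    (h : ∀ n : ℕ, ∫ x, truncate n (g x) ∂η ≤ K + ε n) : ∫ x, g x ∂η ≤ K := by
  have hlim : Tendsto (fun n : ℕ => ∫ x, truncate n (g x) ∂η) atTop (𝓝 (∫ x, g x ∂η)) :=
    tendsto_integral_of_dominated_convergence (fun x => ‖g x‖)
      (fun n => (integrable_truncate_comp hg.1 n.cast_nonneg).1) hg.norm
      (fun n => Eventually.of_forall fun x => abs_truncate_le_abs n.cast_nonneg _)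
      (Eventually.of_forall fun x => tendsto_truncate _)
  simpa using le_of_tendsto_of_tendsto' hlim (tendsto_const_nhds.add hε) h

end Truncation

section LogHarnack

variable {α : Type*} [MeasurableSpace α]

def LogHarnackBound (η μ : Measure α) (K : ℝ) : Prop :=
  ∀ f : α → ℝ, Measurable f → (∃ Cf, ∀ x, |f x| ≤ Cf) → (∀ x, 0 < f x) →
    ∫ x, log (f x) ∂η ≤ log (∫ x, f x ∂μ) + K

variable {η μ : Measure α} {K : ℝ}

lemma LogHarnackBound.absolutelyContinuous [IsFiniteMeasure η] (hK : LogHarnackBound η μ K) :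
    η ≪ μ := by
  refine Measure.AbsolutelyContinuous.mk fun A hA hμA => ?_
  by_contra hηA
  have hpos : 0 < η.real A := ENNReal.toReal_pos hηA (measure_ne_top _ _)
  -- testing with `exp (c 𝟙_A)` gives `c η(A) ≤ log μ(univ) + K` for every `c`
  set c := (log (μ.real univ) + K + 1) / η.real A
  have hf := hK (fun x => exp (A.indicator (fun _ => c) x))
    (measurable_exp.comp (measurable_const.indicator hA))
    ⟨exp |c|, fun x => by
      rw [abs_of_pos (exp_pos _), exp_le_exp]
      by_cases hx : x ∈ A <;> simp [hx, le_abs_self]⟩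
    fun _ => exp_pos _
  have hμf : ∫ x, exp (A.indicator (fun _ => c) x) ∂μ = μ.real univ := by
    rw [integral_congr_ae (g := fun _ => (1 : ℝ))]
    · simp
    · filter_upwards [measure_eq_zero_iff_ae_notMem.1 hμA] with x hx
      simp [hx]
  simp only [log_exp, integral_indicator_const _ hA, smul_eq_mul, hμf] at hf
  have : c * η.real A = log (μ.real univ) + K + 1 := div_mul_cancel₀ _ hpos.ne'
  linarith

lemma integrable_negPart_llr [IsFiniteMeasure η] [IsFiniteMeasure μ] (hac : η ≪ μ) :
    Integrable (fun x => (llr η μ x)⁻) η := by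
  have hmeas : Measurable fun x => (llr η μ x)⁻ := (measurable_llr η μ).neg.max measurable_const
  refine ⟨hmeas.aestronglyMeasurable, ?_⟩
  calc ∫⁻ x, ‖(llr η μ x)⁻‖ₑ ∂η = ∫⁻ x, η.rnDeriv μ x * ‖(llr η μ x)⁻‖ₑ ∂μ :=
        (lintegral_rnDeriv_mul hac hmeas.enorm.aemeasurable).symm
    _ ≤ ∫⁻ _, 1 ∂μ := by
        refine lintegral_mono_ae ?_
        filter_upwards [Measure.rnDeriv_lt_top η μ] with x hx
        rw [← ENNReal.ofReal_toReal hx.ne, llr, Real.enorm_of_nonneg (negPart_nonneg _),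
          ← ENNReal.ofReal_mul ENNReal.toReal_nonneg, ← ENNReal.ofReal_one]
        exact ENNReal.ofReal_le_ofReal (mul_negPart_log_le_one ENNReal.toReal_nonneg)
    _ < ∞ := by simp

lemma LogHarnackBound.integral_truncate_llr_le [IsProbabilityMeasure η] [IsProbabilityMeasure μ]
    (hK : LogHarnackBound η μ K) (a : ℝ) :
    ∫ x, truncate a (llr η μ x) ∂η ≤ K + exp (-a) := by
  have hac := hK.absolutelyContinuous
  set ρ : α → ℝ := fun x => (η.rnDeriv μ x).toReal
  have hρ : Measurable ρ := (Measure.measurable_rnDeriv η μ).ennreal_toReal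
  -- built from `ρ` rather than from `llr η μ`, which is `log 0 = 0` where `ρ` vanishes
  set f : α → ℝ := fun x => max (min (ρ x) (exp a)) (exp (-a))
  have hf_meas : Measurable f := (hρ.min measurable_const).max measurable_const
  have hf_pos : ∀ x, 0 < f x := fun x => (exp_pos _).trans_le (le_max_right _ _)
  have hf_le : ∀ x, f x ≤ exp a + exp (-a) := fun x =>
    max_le ((min_le_right _ _).trans (le_add_of_nonneg_right (exp_pos _).le))
      (le_add_of_nonneg_left (exp_pos _).le)
  have hf_bdd : ∀ x, |f x| ≤ exp a + exp (-a) := fun x =>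
    (abs_of_pos (hf_pos x)).trans_le (hf_le x)
  have hf_int : Integrable f μ := (integrable_const (exp a + exp (-a))).mono'
    hf_meas.aestronglyMeasurable (Eventually.of_forall hf_bdd)
  have hlog_f : (fun x => log (f x)) =ᵐ[η] fun x => truncate a (llr η μ x) := by
    filter_upwards [Measure.rnDeriv_pos hac, hac.ae_le (Measure.rnDeriv_lt_top η μ)]
      with x hpos hlt
    have hfx : f x = exp (truncate a (log (ρ x))) := by
      rw [exp_truncate, exp_log (ENNReal.toReal_pos hpos.ne' hlt.ne)]
    rw [hfx, log_exp]
    rfl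
  have hμf : ∫ x, f x ∂μ ≤ 1 + exp (-a) := by
    calc ∫ x, f x ∂μ ≤ ∫ x, (ρ x + exp (-a)) ∂μ :=
          integral_mono hf_int (Measure.integrable_toReal_rnDeriv.add (integrable_const _))
            fun x => max_le ((min_le_left _ _).trans (le_add_of_nonneg_right (exp_pos _).le))
              (le_add_of_nonneg_left ENNReal.toReal_nonneg)
      _ = 1 + exp (-a) := by
          rw [integral_add Measure.integrable_toReal_rnDeriv (integrable_const _),
            Measure.integral_toReal_rnDeriv hac]
          simp
  have hμf_pos : 0 < ∫ x, f x ∂μ :=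
    calc (0 : ℝ) < ∫ _, exp (-a) ∂μ := by simp [exp_pos]
      _ ≤ ∫ x, f x ∂μ := integral_mono (integrable_const _) hf_int fun x => le_max_right _ _
  calc ∫ x, truncate a (llr η μ x) ∂η = ∫ x, log (f x) ∂η := (integral_congr_ae hlog_f).symm
    _ ≤ log (∫ x, f x ∂μ) + K := hK f hf_meas ⟨_, hf_bdd⟩ hf_pos
    _ ≤ log (1 + exp (-a)) + K := by gcongr
    _ ≤ K + exp (-a) := by linarith [log_le_sub_one_of_pos (by positivity : 0 < 1 + exp (-a))]

end LogHarnack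

section SemigroupDecay

variable {X : Type*} {S : Set X} {P : ℝ → X → X} {w : X → ℝ} {e : X → ℝ≥0∞} {t₀ c₀ C : ℝ}

theorem max_le_of_sqDist_decay (ht₀ : 0 ≤ t₀) (hc₀ : 0 < c₀) (hw : ∀ x, 0 ≤ w x)
    (hmaps : ∀ t ≥ (0:ℝ), ∀ x ∈ S, P t x ∈ S)
    (hsemigroup : ∀ s ≥ (0:ℝ), ∀ t ≥ (0:ℝ), ∀ x ∈ S, P (t + s) x = P t (P s x))
    (hent : ∀ x ∈ S, e (P t₀ x) ≤ ENNReal.ofReal (c₀ * w x))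
    (htal : ∀ x ∈ S, ENNReal.ofReal (w x) ≤ ENNReal.ofReal C * e x)
    {c₁ lam t₁ : ℝ} (hc₁ : 0 ≤ c₁) (hlam : 0 ≤ lam) (ht₁ : 0 ≤ t₁)
    (hdecay : ∀ t ≥ t₁, ∀ x ∈ S, w (P t x) ≤ c₁ * exp (-lam * t) * w x)
    {t : ℝ} (ht : t₀ + t₁ ≤ t) {x : X} (hx : x ∈ S) :
    max (ENNReal.ofReal c₀⁻¹ * e (P t x)) (ENNReal.ofReal (w (P t x))) ≤
      ENNReal.ofReal (c₁ * exp (-lam * (t - t₀))) *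
        min (ENNReal.ofReal (w x)) (ENNReal.ofReal C * e x) := by
  have hs : 0 ≤ t - t₀ := by linarith
  have hr : 0 ≤ c₁ * exp (-lam * (t - t₀)) := by positivity
  have hsplit : P t x = P t₀ (P (t - t₀) x) := by
    simpa using hsemigroup (t - t₀) hs t₀ ht₀ x hx
  have hw_decay : w (P t x) ≤ c₁ * exp (-lam * (t - t₀)) * w x :=
    (hdecay t (by linarith) x hx).trans <| mul_le_mul_of_nonneg_right
      (mul_le_mul_of_nonneg_left (exp_neg_mul_le_exp_neg_mul_sub hlam ht₀ t) hc₁) (hw x)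
  have he_decay : e (P t x) ≤
      ENNReal.ofReal c₀ * ENNReal.ofReal (c₁ * exp (-lam * (t - t₀)) * w x) := by
    rw [hsplit, ← ENNReal.ofReal_mul hc₀.le]
    exact (hent _ (hmaps _ hs x hx)).trans
      (ENNReal.ofReal_le_ofReal (by gcongr; exact hdecay _ (by linarith) x hx))
  rw [min_eq_left (htal x hx), ← ENNReal.ofReal_mul hr]
  refine max_le ?_ (ENNReal.ofReal_le_ofReal hw_decay)
  calc ENNReal.ofReal c₀⁻¹ * e (P t x)
      ≤ ENNReal.ofReal c₀⁻¹ * (ENNReal.ofReal c₀ *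
          ENNReal.ofReal (c₁ * exp (-lam * (t - t₀)) * w x)) := by gcongr
    _ = _ := ENNReal.ofReal_inv_mul_ofReal_mul hc₀ _

theorem max_le_of_entropy_decay (ht₀ : 0 ≤ t₀) (hC : 0 < C)
    (hmaps : ∀ t ≥ (0:ℝ), ∀ x ∈ S, P t x ∈ S)
    (hsemigroup : ∀ s ≥ (0:ℝ), ∀ t ≥ (0:ℝ), ∀ x ∈ S, P (t + s) x = P t (P s x))
    (hent : ∀ x ∈ S, e (P t₀ x) ≤ ENNReal.ofReal (c₀ * w x))
    (htal : ∀ x ∈ S, ENNReal.ofReal (w x) ≤ ENNReal.ofReal C * e x)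
    {c₂ lam t₂ : ℝ} (hc₂ : 0 ≤ c₂) (hlam : 0 ≤ lam) (ht₂ : 0 ≤ t₂)
    (hdecay : ∀ t ≥ t₂, ∀ x ∈ S, e (P t x) ≤ ENNReal.ofReal (c₂ * exp (-lam * t)) * e x)
    {t : ℝ} (ht : t₀ + t₂ ≤ t) {x : X} (hx : x ∈ S) :
    max (e (P t x)) (ENNReal.ofReal C⁻¹ * ENNReal.ofReal (w (P t x))) ≤
      ENNReal.ofReal (c₂ * exp (-lam * (t - t₀))) *
        min (ENNReal.ofReal (c₀ * w x)) (e x) := by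
  have hs : 0 ≤ t - t₀ := by linarith
  have hsplit : P t x = P (t - t₀) (P t₀ x) := by
    simpa using hsemigroup t₀ ht₀ (t - t₀) hs x hx
  have he_decay : e (P t x) ≤
      ENNReal.ofReal (c₂ * exp (-lam * (t - t₀))) * min (ENNReal.ofReal (c₀ * w x)) (e x) := by
    rw [mul_min]
    refine le_min ?_ ?_
    · rw [hsplit]
      exact (hdecay _ (by linarith) _ (hmaps t₀ ht₀ x hx)).trans (by gcongr; exact hent x hx)
    · exact (hdecay t (by linarith) x hx).trans <| mul_le_mul_left (ENNReal.ofReal_le_ofReal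
        (mul_le_mul_of_nonneg_left (exp_neg_mul_le_exp_neg_mul_sub hlam ht₀ t) hc₂)) _
  refine max_le he_decay ?_
  calc ENNReal.ofReal C⁻¹ * ENNReal.ofReal (w (P t x))
      ≤ ENNReal.ofReal C⁻¹ * (ENNReal.ofReal C * e (P t x)) := by
        gcongr
        exact htal _ (hmaps t (by linarith) x hx)
    _ = e (P t x) := ENNReal.ofReal_inv_mul_ofReal_mul hC _
    _ ≤ _ := he_decay

end SemigroupDecay

namespace DDSDE

variable {d m : ℕ}

theorem map_swap_mem_coupling {E F : Type*} [MeasurableSpace E] [MeasurableSpace F]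
    {μ : Measure E} {ν : Measure F} {γ : Measure (E × F)} (hγ : γ ∈ Coupling μ ν) :
    γ.map Prod.swap ∈ Coupling ν μ := by
  obtain ⟨hprob, hfst, hsnd⟩ := hγ
  refine ⟨Measure.isProbabilityMeasure_map measurable_swap.aemeasurable, ?_, ?_⟩
  · rwa [Measure.map_map measurable_fst measurable_swap]
  · rwa [Measure.map_map measurable_snd measurable_swap]

theorem Wdist_comm {E : Type*} [MeasurableSpace E] [PseudoMetricSpace E] (p : ℝ)
    (μ ν : Measure E) : Wdist p μ ν = Wdist p ν μ := by
  have key : ∀ μ ν : Measure E, ∀ γ ∈ Coupling μ ν, ∃ γ' ∈ Coupling ν μ,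
      ∫ z, dist z.1 z.2 ^ p ∂γ' = ∫ z, dist z.1 z.2 ^ p ∂γ := fun μ ν γ hγ =>
    ⟨γ.map Prod.swap, map_swap_mem_coupling hγ, by
      rw [show γ.map Prod.swap = γ.map MeasurableEquiv.prodComm from rfl, integral_map_equiv]
      exact integral_congr_ae (Eventually.of_forall fun z => congrArg (· ^ p) (dist_comm _ _))⟩
  unfold Wdist
  congr 1
  ext r
  constructor <;> rintro ⟨γ, hγ, rfl⟩ <;> obtain ⟨γ', hγ', h⟩ := key _ _ γ hγ <;>
    exact ⟨γ', hγ', congrArg (· ^ (1 / max p 1)) h⟩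

theorem ent_le_of_logHarnackBound {E : Type*} [MeasurableSpace E] {η μ : Measure E}
    [IsProbabilityMeasure η] [IsProbabilityMeasure μ] {K : ℝ} (hK : LogHarnackBound η μ K) :
    Ent η μ ≤ ENNReal.ofReal K := by
  have hac := hK.absolutelyContinuous
  have htr : ∀ n : ℕ, ∫ x, truncate n (llr η μ x) ∂η ≤ K + exp (-n) := fun n =>
    hK.integral_truncate_llr_le n
  have hε : Tendsto (fun n : ℕ => exp (-(n : ℝ))) atTop (𝓝 0) :=
    tendsto_exp_neg_atTop_nhds_zero.comp tendsto_natCast_atTop_atTop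
  have hint := integrable_of_integral_truncate_le (measurable_llr η μ).aestronglyMeasurable
    (integrable_negPart_llr hac) hε htr
  rw [Ent, if_pos ⟨hac, hint⟩]
  exact ENNReal.ofReal_le_ofReal (integral_le_of_integral_truncate_le hint hε htr)

theorem entropy_ergodicity_criterion_general
    (Pstar : ℝ → Measure (Vec d) → Measure (Vec d))
    (hmaps : ∀ t ≥ (0:ℝ), ∀ ν ∈ Pclass 2 d, Pstar t ν ∈ Pclass 2 d)
    (hsemigroup : ∀ s ≥ (0:ℝ), ∀ t ≥ (0:ℝ), ∀ ν ∈ Pclass 2 d,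
      Pstar (t + s) ν = Pstar t (Pstar s ν))
    -- unique invariant probability measure μinf ∈ 𝒫_2(ℝ^d)
    (μinf : Measure (Vec d)) (hμinf : μinf ∈ Pclass 2 d)
    (hinv : ∀ t ≥ (0:ℝ), Pstar t μinf = μinf)
    -- log-Harnack inequality at time t₀
    (t₀ c₀ C : ℝ) (ht₀ : 0 < t₀) (hc₀ : 0 < c₀) (hC : 0 < C)
    (hLH : ∀ μ ∈ Pclass 2 d, ∀ ν ∈ Pclass 2 d,
      ∀ f : Vec d → ℝ, Measurable f → (∃ Cf, ∀ x, |f x| ≤ Cf) → (∀ x, 0 < f x) →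
        ∫ x, Real.log (f x) ∂(Pstar t₀ ν) ≤
          Real.log (∫ x, f x ∂(Pstar t₀ μ)) + c₀ * Wdist 2 μ ν ^ 2)
    -- Talagrand inequality
    (hTal : ∀ μ ∈ Pclass 2 d,
      ENNReal.ofReal (Wdist 2 μ μinf ^ 2) ≤ ENNReal.ofReal C * Ent μ μinf) :
    -- (1) W₂-exponential decay implies decay of entropy and W₂
    (∀ c₁ lam t₁ : ℝ, 0 ≤ c₁ → 0 ≤ lam → 0 ≤ t₁ →
      (∀ t ≥ t₁, ∀ μ ∈ Pclass 2 d,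
        Wdist 2 (Pstar t μ) μinf ^ 2 ≤ c₁ * Real.exp (-lam * t) * Wdist 2 μ μinf ^ 2) →
      ∀ t ≥ t₀ + t₁, ∀ μ ∈ Pclass 2 d,
        max (ENNReal.ofReal c₀⁻¹ * Ent (Pstar t μ) μinf)
            (ENNReal.ofReal (Wdist 2 (Pstar t μ) μinf ^ 2)) ≤
          ENNReal.ofReal (c₁ * Real.exp (-lam * (t - t₀))) *
            min (ENNReal.ofReal (Wdist 2 μ μinf ^ 2)) (ENNReal.ofReal C * Ent μ μinf)) ∧
    -- (2) entropy-exponential decay implies decay of entropy and W₂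
    (∀ c₂ lam t₂ : ℝ, 0 < c₂ → 0 < lam → 0 < t₂ →
      (∀ t ≥ t₂, ∀ μ ∈ Pclass 2 d,
        Ent (Pstar t μ) μinf ≤ ENNReal.ofReal (c₂ * Real.exp (-lam * t)) * Ent μ μinf) →
      ∀ t ≥ t₀ + t₂, ∀ μ ∈ Pclass 2 d,
        max (Ent (Pstar t μ) μinf)
            (ENNReal.ofReal C⁻¹ * ENNReal.ofReal (Wdist 2 (Pstar t μ) μinf ^ 2)) ≤
          ENNReal.ofReal (c₂ * Real.exp (-lam * (t - t₀))) *
            min (ENNReal.ofReal (c₀ * Wdist 2 μ μinf ^ 2)) (Ent μ μinf)) := by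
  have hent : ∀ ν ∈ Pclass 2 d,
      Ent (Pstar t₀ ν) μinf ≤ ENNReal.ofReal (c₀ * Wdist 2 ν μinf ^ 2) := by
    intro ν hν
    have := hμinf.1
    have := (hmaps t₀ ht₀.le ν hν).1
    refine ent_le_of_logHarnackBound fun f hf hbdd hpos => ?_
    simpa [hinv t₀ ht₀.le, Wdist_comm 2 μinf ν] using hLH μinf hμinf ν hν f hf hbdd hpos
  refine ⟨fun c₁ lam t₁ hc₁ hlam ht₁ hdecay t ht μ hμ => ?_,
    fun c₂ lam t₂ hc₂ hlam ht₂ hdecay t ht μ hμ => ?_⟩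
  · exact max_le_of_sqDist_decay ht₀.le hc₀ (fun _ => sq_nonneg _) hmaps hsemigroup hent
      hTal hc₁ hlam ht₁ hdecay ht hμ
  · exact max_le_of_entropy_decay ht₀.le hC hmaps hsemigroup hent hTal hc₂.le hlam.le ht₂.le
      hdecay ht hμ

/-- **Exponential ergodicity in entropy via log-Harnack and Talagrand inequalities**
(Ren–Wang).  Let `P_t^*` be the semigroup of the DDSDE on `𝒫_2(ℝ^d)` with unique invariant
probability measure `μinf`, satisfying a log-Harnack inequality at time `t₀` and a Talagrand
inequality.  Then exponential decay of `W_2` implies exponential decay of both `W_2` and the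
relative entropy, and vice versa. -/
theorem entropy_ergodicity_criterion
    (b : Vec d → Measure (Vec d) → Vec d)
    (σ : Vec d → Measure (Vec d) → Mat d m)
    (Pstar : ℝ → Measure (Vec d) → Measure (Vec d))
    -- `P_t^*μ` is the marginal law of the (well-posed) DDSDE with initial distribution `μ`
    (hPstar : ∀ ν ∈ Pclass 2 d,
      ∀ sol : WeakSolutionIn (fun _ x μ' => b x μ') (fun _ x μ' => σ x μ') 0 (Ici 0) ν,
      ∀ t ≥ (0:ℝ), sol.law t = Pstar t ν)
    (hexists : ∀ ν ∈ Pclass 2 d,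
      Nonempty (WeakSolutionIn (fun _ x μ' => b x μ') (fun _ x μ' => σ x μ') 0 (Ici 0) ν))
    (hmaps : ∀ t ≥ (0:ℝ), ∀ ν ∈ Pclass 2 d, Pstar t ν ∈ Pclass 2 d)
    (hsemigroup : ∀ s ≥ (0:ℝ), ∀ t ≥ (0:ℝ), ∀ ν ∈ Pclass 2 d,
      Pstar (t + s) ν = Pstar t (Pstar s ν))
    (hzero : ∀ ν ∈ Pclass 2 d, Pstar 0 ν = ν)
    -- unique invariant probability measure μinf ∈ 𝒫_2(ℝ^d)
    (μinf : Measure (Vec d)) (hμinf : μinf ∈ Pclass 2 d)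
    (hinv : ∀ t ≥ (0:ℝ), Pstar t μinf = μinf)
    (huniq : ∀ ν ∈ Pclass 2 d, (∀ t ≥ (0:ℝ), Pstar t ν = ν) → ν = μinf)
    -- log-Harnack inequality at time t₀
    (t₀ c₀ C : ℝ) (ht₀ : 0 < t₀) (hc₀ : 0 < c₀) (hC : 0 < C)
    (hLH : ∀ μ ∈ Pclass 2 d, ∀ ν ∈ Pclass 2 d,
      ∀ f : Vec d → ℝ, Measurable f → (∃ Cf, ∀ x, |f x| ≤ Cf) → (∀ x, 0 < f x) →
        ∫ x, Real.log (f x) ∂(Pstar t₀ ν) ≤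
          Real.log (∫ x, f x ∂(Pstar t₀ μ)) + c₀ * Wdist 2 μ ν ^ 2)
    -- Talagrand inequality
    (hTal : ∀ μ ∈ Pclass 2 d,
      ENNReal.ofReal (Wdist 2 μ μinf ^ 2) ≤ ENNReal.ofReal C * Ent μ μinf) :
    -- (1) W₂-exponential decay implies decay of entropy and W₂
    (∀ c₁ lam t₁ : ℝ, 0 ≤ c₁ → 0 ≤ lam → 0 ≤ t₁ →
      (∀ t ≥ t₁, ∀ μ ∈ Pclass 2 d,
        Wdist 2 (Pstar t μ) μinf ^ 2 ≤ c₁ * Real.exp (-lam * t) * Wdist 2 μ μinf ^ 2) →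
      ∀ t ≥ t₀ + t₁, ∀ μ ∈ Pclass 2 d,
        max (ENNReal.ofReal c₀⁻¹ * Ent (Pstar t μ) μinf)
            (ENNReal.ofReal (Wdist 2 (Pstar t μ) μinf ^ 2)) ≤
          ENNReal.ofReal (c₁ * Real.exp (-lam * (t - t₀))) *
            min (ENNReal.ofReal (Wdist 2 μ μinf ^ 2)) (ENNReal.ofReal C * Ent μ μinf)) ∧
    -- (2) entropy-exponential decay implies decay of entropy and W₂
    (∀ c₂ lam t₂ : ℝ, 0 < c₂ → 0 < lam → 0 < t₂ →
      (∀ t ≥ t₂, ∀ μ ∈ Pclass 2 d,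
        Ent (Pstar t μ) μinf ≤ ENNReal.ofReal (c₂ * Real.exp (-lam * t)) * Ent μ μinf) →
      ∀ t ≥ t₀ + t₂, ∀ μ ∈ Pclass 2 d,
        max (Ent (Pstar t μ) μinf)
            (ENNReal.ofReal C⁻¹ * ENNReal.ofReal (Wdist 2 (Pstar t μ) μinf ^ 2)) ≤
          ENNReal.ofReal (c₂ * Real.exp (-lam * (t - t₀))) *
            min (ENNReal.ofReal (c₀ * Wdist 2 μ μinf ^ 2)) (Ent μ μinf)) :=
  entropy_ergodicity_criterion_general Pstar hmaps hsemigroup μinf hμinf hinv t₀ c₀ C ht₀ hc₀ hC hLH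
    hTal
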